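/- The operators Â_{ij} = −i(u_i ∂_{u_j} − u_j ∂_{u_i}), B̂_{ij} = −i(v_i ∂_{v_j} − v_j ∂_{v_i}), and Ĉ_{ij} = u_i v_j + ∂_{u_i} ∂_{v_j} on smooth functions on ℝ^{p+q} all commute with the constraint operators Ĥ₁ = −(1/2)(Δ_u + |v|²), Ĥ₂ = −(1/2)(Δ_v + |u|²), and D̂ = −i(u·∇_u − v·∇_v + (p−q)/2). -/

import Mathlib

open Complex
open scoped BigOperators

namespace Stmt12

variable {p q : ℕ}

noncomputable def du (i : Fin p) (f : (Fin p → ℝ) → (Fin q → ℝ) → ℂ) :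
    (Fin p → ℝ) → (Fin q → ℝ) → ℂ :=
  fun u v => fderiv ℝ (fun u' => f u' v) u (Pi.single i 1)

noncomputable def dv (j : Fin q) (f : (Fin p → ℝ) → (Fin q → ℝ) → ℂ) :
    (Fin p → ℝ) → (Fin q → ℝ) → ℂ :=
  fun u v => fderiv ℝ (fun v' => f u v') v (Pi.single j 1)

noncomputable def H1op (f : (Fin p → ℝ) → (Fin q → ℝ) → ℂ) :
    (Fin p → ℝ) → (Fin q → ℝ) → ℂ :=
  fun u v => -(1/2 : ℂ) * ((∑ i, du i (du i f) u v) + ((∑ j, (v j)^2 : ℝ) : ℂ) * f u v)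

noncomputable def H2op (f : (Fin p → ℝ) → (Fin q → ℝ) → ℂ) :
    (Fin p → ℝ) → (Fin q → ℝ) → ℂ :=
  fun u v => -(1/2 : ℂ) * ((∑ j, dv j (dv j f) u v) + ((∑ i, (u i)^2 : ℝ) : ℂ) * f u v)

noncomputable def Dop (f : (Fin p → ℝ) → (Fin q → ℝ) → ℂ) :
    (Fin p → ℝ) → (Fin q → ℝ) → ℂ :=
  fun u v => -I * ((∑ i, (u i : ℂ) * du i f u v) - (∑ j, (v j : ℂ) * dv j f u v)
      + (((p:ℂ) - (q:ℂ))/2) * f u v)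

/-- `Â_{ij} = −i(u_i ∂_{u_j} − u_j ∂_{u_i})`. -/
noncomputable def Aop (i j : Fin p) (f : (Fin p → ℝ) → (Fin q → ℝ) → ℂ) :
    (Fin p → ℝ) → (Fin q → ℝ) → ℂ :=
  fun u v => -I * ((u i : ℂ) * du j f u v - (u j : ℂ) * du i f u v)

/-- `B̂_{ij} = −i(v_i ∂_{v_j} − v_j ∂_{v_i})`. -/
noncomputable def Bop (i j : Fin q) (f : (Fin p → ℝ) → (Fin q → ℝ) → ℂ) :
    (Fin p → ℝ) → (Fin q → ℝ) → ℂ :=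
  fun u v => -I * ((v i : ℂ) * dv j f u v - (v j : ℂ) * dv i f u v)

/-- `Ĉ_{ij} = u_i v_j + ∂_{u_i} ∂_{v_j}`. -/
noncomputable def Cop (i : Fin p) (j : Fin q) (f : (Fin p → ℝ) → (Fin q → ℝ) → ℂ) :
    (Fin p → ℝ) → (Fin q → ℝ) → ℂ :=
  fun u v => (u i : ℂ) * (v j : ℂ) * f u v + du i (dv j f) u v

section Defs
variable {p q : ℕ}

theorem H1op_def (f : (Fin p → ℝ) → (Fin q → ℝ) → ℂ) :
    H1op f = fun u v => -(1/2 : ℂ) * ((∑ i, du i (du i f) u v)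
        + ((∑ j, (v j)^2 : ℝ) : ℂ) * f u v) := rfl

theorem H2op_def (f : (Fin p → ℝ) → (Fin q → ℝ) → ℂ) :
    H2op f = fun u v => -(1/2 : ℂ) * ((∑ j, dv j (dv j f) u v)
        + ((∑ i, (u i)^2 : ℝ) : ℂ) * f u v) := rfl

theorem Dop_def (f : (Fin p → ℝ) → (Fin q → ℝ) → ℂ) :
    Dop f = fun u v => -I * ((∑ i, (u i : ℂ) * du i f u v) - (∑ j, (v j : ℂ) * dv j f u v)
        + (((p:ℂ) - (q:ℂ))/2) * f u v) := rfl

theorem Aop_def (i j : Fin p) (f : (Fin p → ℝ) → (Fin q → ℝ) → ℂ) :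
    Aop i j f = fun u v => -I * ((u i : ℂ) * du j f u v - (u j : ℂ) * du i f u v) := rfl

theorem Bop_def (i j : Fin q) (f : (Fin p → ℝ) → (Fin q → ℝ) → ℂ) :
    Bop i j f = fun u v => -I * ((v i : ℂ) * dv j f u v - (v j : ℂ) * dv i f u v) := rfl

theorem Cop_def (i : Fin p) (j : Fin q) (f : (Fin p → ℝ) → (Fin q → ℝ) → ℂ) :
    Cop i j f = fun u v => (u i : ℂ) * (v j : ℂ) * f u v + du i (dv j f) u v := rfl

end Defs
section Lib
variable {p q : ℕ}

local notation "E" => (Fin p → ℝ)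
local notation "F" => (Fin q → ℝ)

/-- Joint smoothness of a curried function. -/
def Sm (f : (Fin p → ℝ) → (Fin q → ℝ) → ℂ) : Prop :=
  ContDiff ℝ (⊤ : ℕ∞) (fun x : (Fin p → ℝ) × (Fin q → ℝ) => f x.1 x.2)

theorem Sm.d1 {f : E → F → ℂ} (h : Sm f) (v : F) :
    Differentiable ℝ (fun u => f u v) := by
  have : ContDiff ℝ (⊤ : ℕ∞) (fun u : E => f u v) :=
    h.comp (contDiff_id.prodMk contDiff_const)
  exact this.differentiable (by simp)

theorem Sm.d2 {f : E → F → ℂ} (h : Sm f) (u : E) :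
    Differentiable ℝ (fun v => f u v) := by
  have : ContDiff ℝ (⊤ : ℕ∞) (fun v : F => f u v) :=
    h.comp (contDiff_const.prodMk contDiff_id)
  exact this.differentiable (by simp)

/-- `du` as a directional derivative of the uncurried function. -/
theorem du_eq {f : E → F → ℂ} (h : Sm f) (i : Fin p) (u : E) (v : F) :
    du i f u v
      = fderiv ℝ (fun x : E × F => f x.1 x.2) (u, v) (Pi.single i 1, 0) := by
  have hF : HasFDerivAt (fun x : E × F => f x.1 x.2)
      (fderiv ℝ (fun x : E × F => f x.1 x.2) (u, v)) (u, v) :=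
    ((h.differentiable (by simp)) (u, v)).hasFDerivAt
  have hg : HasFDerivAt (fun u' : E => (u', v))
      ((ContinuousLinearMap.id ℝ E).prod (0 : E →L[ℝ] F)) u :=
    HasFDerivAt.prodMk (hasFDerivAt_id u) (hasFDerivAt_const v u)
  have hc := (hF.comp u hg).fderiv
  have : du i f u v = fderiv ℝ (fun u' : E => f u' v) u (Pi.single i 1) := rfl
  rw [this]
  show fderiv ℝ ((fun x : E × F => f x.1 x.2) ∘ (fun u' : E => (u', v))) u (Pi.single i 1) = _
  rw [hc]
  rfl

theorem dv_eq {f : E → F → ℂ} (h : Sm f) (j : Fin q) (u : E) (v : F) :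
    dv j f u v
      = fderiv ℝ (fun x : E × F => f x.1 x.2) (u, v) (0, Pi.single j 1) := by
  have hF : HasFDerivAt (fun x : E × F => f x.1 x.2)
      (fderiv ℝ (fun x : E × F => f x.1 x.2) (u, v)) (u, v) :=
    ((h.differentiable (by simp)) (u, v)).hasFDerivAt
  have hg : HasFDerivAt (fun v' : F => (u, v'))
      ((0 : F →L[ℝ] E).prod (ContinuousLinearMap.id ℝ F)) v :=
    HasFDerivAt.prodMk (hasFDerivAt_const u v) (hasFDerivAt_id v)
  have hc := (hF.comp v hg).fderiv
  have : dv j f u v = fderiv ℝ (fun v' : F => f u v') v (Pi.single j 1) := rfl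
  rw [this]
  show fderiv ℝ ((fun x : E × F => f x.1 x.2) ∘ (fun v' : F => (u, v'))) v (Pi.single j 1) = _
  rw [hc]
  rfl

theorem Sm.Du {f : E → F → ℂ} (h : Sm f) (i : Fin p) : Sm (du i f) := by
  have : (fun x : E × F => du i f x.1 x.2)
      = fun x : E × F => fderiv ℝ (fun y : E × F => f y.1 y.2) x (Pi.single i 1, 0) := by
    funext x
    exact du_eq h i x.1 x.2
  unfold Sm
  rw [this]
  exact (h.fderiv_right (by simp)).clm_apply contDiff_const

theorem Sm.Dv {f : E → F → ℂ} (h : Sm f) (j : Fin q) : Sm (dv j f) := by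
  have : (fun x : E × F => dv j f x.1 x.2)
      = fun x : E × F => fderiv ℝ (fun y : E × F => f y.1 y.2) x (0, Pi.single j 1) := by
    funext x
    exact dv_eq h j x.1 x.2
  unfold Sm
  rw [this]
  exact (h.fderiv_right (by simp)).clm_apply contDiff_const

end Lib
section Lib2
variable {p q : ℕ}

local notation "E" => (Fin p → ℝ)
local notation "F" => (Fin q → ℝ)

/-- Symmetry of directional second derivatives for smooth functions. -/
theorem sym_snd {X : Type*} [NormedAddCommGroup X] [NormedSpace ℝ X]
    {G : X → ℂ} (h : ContDiff ℝ (⊤ : ℕ∞) G) (x a b : X) :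
    fderiv ℝ (fun y => fderiv ℝ G y b) x a
      = fderiv ℝ (fun y => fderiv ℝ G y a) x b := by
  have hG : ∀ y, HasFDerivAt G (fderiv ℝ G y) y :=
    fun y => ((h.differentiable (by simp)) y).hasFDerivAt
  have hG' : Differentiable ℝ (fderiv ℝ G) :=
    (h.fderiv_right (m := (⊤ : ℕ∞)) (by simp)).differentiable (by simp)
  have h2 : HasFDerivAt (fderiv ℝ G) (fderiv ℝ (fderiv ℝ G) x) x :=
    (hG' x).hasFDerivAt
  have sym := second_derivative_symmetric hG h2
  have key : ∀ c : X, fderiv ℝ (fun y => fderiv ℝ G y c) x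
      = (ContinuousLinearMap.apply ℝ ℂ c).comp (fderiv ℝ (fderiv ℝ G) x) := by
    intro c
    have := ((ContinuousLinearMap.apply ℝ ℂ c).hasFDerivAt.comp x h2).fderiv
    exact this
  calc fderiv ℝ (fun y => fderiv ℝ G y b) x a
      = fderiv ℝ (fderiv ℝ G) x a b := by rw [key]; rfl
    _ = fderiv ℝ (fderiv ℝ G) x b a := sym a b
    _ = fderiv ℝ (fun y => fderiv ℝ G y a) x b := by rw [key]; rfl

theorem du_du_comm {f : E → F → ℂ} (h : Sm f) (i j : Fin p) :
    du i (du j f) = du j (du i f) := by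
  funext u v
  rw [du_eq (h.Du j) i u v, du_eq (h.Du i) j u v]
  have e1 : (fun x : E × F => du j f x.1 x.2)
      = fun x => fderiv ℝ (fun y : E × F => f y.1 y.2) x (Pi.single j 1, 0) :=
    funext fun x => du_eq h j x.1 x.2
  have e2 : (fun x : E × F => du i f x.1 x.2)
      = fun x => fderiv ℝ (fun y : E × F => f y.1 y.2) x (Pi.single i 1, 0) :=
    funext fun x => du_eq h i x.1 x.2
  rw [e1, e2]
  exact sym_snd h (u, v) _ _

theorem dv_dv_comm {f : E → F → ℂ} (h : Sm f) (i j : Fin q) :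
    dv i (dv j f) = dv j (dv i f) := by
  funext u v
  rw [dv_eq (h.Dv j) i u v, dv_eq (h.Dv i) j u v]
  have e1 : (fun x : E × F => dv j f x.1 x.2)
      = fun x => fderiv ℝ (fun y : E × F => f y.1 y.2) x (0, Pi.single j 1) :=
    funext fun x => dv_eq h j x.1 x.2
  have e2 : (fun x : E × F => dv i f x.1 x.2)
      = fun x => fderiv ℝ (fun y : E × F => f y.1 y.2) x (0, Pi.single i 1) :=
    funext fun x => dv_eq h i x.1 x.2
  rw [e1, e2]
  exact sym_snd h (u, v) _ _

theorem du_dv_comm {f : E → F → ℂ} (h : Sm f) (i : Fin p) (j : Fin q) :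
    du i (dv j f) = dv j (du i f) := by
  funext u v
  rw [du_eq (h.Dv j) i u v, dv_eq (h.Du i) j u v]
  have e1 : (fun x : E × F => dv j f x.1 x.2)
      = fun x => fderiv ℝ (fun y : E × F => f y.1 y.2) x (0, Pi.single j 1) :=
    funext fun x => dv_eq h j x.1 x.2
  have e2 : (fun x : E × F => du i f x.1 x.2)
      = fun x => fderiv ℝ (fun y : E × F => f y.1 y.2) x (Pi.single i 1, 0) :=
    funext fun x => du_eq h i x.1 x.2
  rw [e1, e2]
  exact sym_snd h (u, v) _ _

end Lib2
section Lib3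
variable {p q : ℕ}

local notation "E" => (Fin p → ℝ)
local notation "F" => (Fin q → ℝ)

theorem du_const_mul {g : E → F → ℂ} (h : Sm g) (c : ℂ) (i : Fin p) :
    du i (fun u v => c * g u v) = fun u v => c * du i g u v := by
  funext u v
  show fderiv ℝ (fun u' => c * g u' v) u (Pi.single i 1) = _
  rw [fderiv_const_mul (h.d1 v u) c]
  rfl

theorem dv_const_mul {g : E → F → ℂ} (h : Sm g) (c : ℂ) (j : Fin q) :
    dv j (fun u v => c * g u v) = fun u v => c * dv j g u v := by
  funext u v
  show fderiv ℝ (fun v' => c * g u v') v (Pi.single j 1) = _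
  rw [fderiv_const_mul (h.d2 u v) c]
  rfl

theorem du_add {g h : E → F → ℂ} (hg : Sm g) (hh : Sm h) (i : Fin p) :
    du i (fun u v => g u v + h u v) = fun u v => du i g u v + du i h u v := by
  funext u v
  show fderiv ℝ (fun u' => g u' v + h u' v) u (Pi.single i 1) = _
  rw [fderiv_fun_add (hg.d1 v u) (hh.d1 v u)]
  rfl

theorem dv_add {g h : E → F → ℂ} (hg : Sm g) (hh : Sm h) (j : Fin q) :
    dv j (fun u v => g u v + h u v) = fun u v => dv j g u v + dv j h u v := by
  funext u v
  show fderiv ℝ (fun v' => g u v' + h u v') v (Pi.single j 1) = _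
  rw [fderiv_fun_add (hg.d2 u v) (hh.d2 u v)]
  rfl

theorem du_sub {g h : E → F → ℂ} (hg : Sm g) (hh : Sm h) (i : Fin p) :
    du i (fun u v => g u v - h u v) = fun u v => du i g u v - du i h u v := by
  funext u v
  show fderiv ℝ (fun u' => g u' v - h u' v) u (Pi.single i 1) = _
  rw [fderiv_fun_sub (hg.d1 v u) (hh.d1 v u)]
  rfl

theorem dv_sub {g h : E → F → ℂ} (hg : Sm g) (hh : Sm h) (j : Fin q) :
    dv j (fun u v => g u v - h u v) = fun u v => dv j g u v - dv j h u v := by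
  funext u v
  show fderiv ℝ (fun v' => g u v' - h u v') v (Pi.single j 1) = _
  rw [fderiv_fun_sub (hg.d2 u v) (hh.d2 u v)]
  rfl

theorem du_sum {ι : Type*} {s : Finset ι} {G : ι → E → F → ℂ}
    (h : ∀ k ∈ s, Sm (G k)) (i : Fin p) :
    du i (fun u v => ∑ k ∈ s, G k u v) = fun u v => ∑ k ∈ s, du i (G k) u v := by
  funext u v
  show fderiv ℝ (fun u' => ∑ k ∈ s, G k u' v) u (Pi.single i 1) = _
  rw [fderiv_fun_sum (fun k hk => (h k hk).d1 v u), ContinuousLinearMap.sum_apply]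
  rfl

theorem dv_sum {ι : Type*} {s : Finset ι} {G : ι → E → F → ℂ}
    (h : ∀ k ∈ s, Sm (G k)) (j : Fin q) :
    dv j (fun u v => ∑ k ∈ s, G k u v) = fun u v => ∑ k ∈ s, dv j (G k) u v := by
  funext u v
  show fderiv ℝ (fun v' => ∑ k ∈ s, G k u v') v (Pi.single j 1) = _
  rw [fderiv_fun_sum (fun k hk => (h k hk).d2 u v), ContinuousLinearMap.sum_apply]
  rfl

/-- Multiplication by a function of `v` only commutes with `du`. -/
theorem du_vmul {g : E → F → ℂ} (h : Sm g) (c : F → ℂ) (i : Fin p) :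
    du i (fun u v => c v * g u v) = fun u v => c v * du i g u v := by
  funext u v
  show fderiv ℝ (fun u' => c v * g u' v) u (Pi.single i 1) = _
  rw [fderiv_const_mul (h.d1 v u) (c v)]
  rfl

/-- Multiplication by a function of `u` only commutes with `dv`. -/
theorem dv_umul {g : E → F → ℂ} (h : Sm g) (c : E → ℂ) (j : Fin q) :
    dv j (fun u v => c u * g u v) = fun u v => c u * dv j g u v := by
  funext u v
  show fderiv ℝ (fun v' => c u * g u v') v (Pi.single j 1) = _
  rw [fderiv_const_mul (h.d2 u v) (c u)]
  rfl

theorem du_coordU {g : E → F → ℂ} (h : Sm g) (k i : Fin p) :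
    du i (fun u v => (u k : ℂ) * g u v)
      = fun u v => (if k = i then 1 else 0) * g u v + (u k : ℂ) * du i g u v := by
  funext u v
  show fderiv ℝ (fun u' => ((u' k : ℝ) : ℂ) * g u' v) u (Pi.single i 1) = _
  have hcd : DifferentiableAt ℝ (fun u' : E => ((u' k : ℝ) : ℂ)) u :=
    (Complex.ofRealCLM.differentiable.comp
      ((ContinuousLinearMap.proj (R := ℝ) (φ := fun _ : Fin p => ℝ) k).differentiable)) u
  rw [fderiv_fun_mul hcd (h.d1 v u)]
  have hfd : fderiv ℝ (fun u' : E => ((u' k : ℝ) : ℂ)) u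
      = Complex.ofRealCLM.comp (ContinuousLinearMap.proj (R := ℝ) (φ := fun _ : Fin p => ℝ) k) :=
    ((Complex.ofRealCLM.comp (ContinuousLinearMap.proj (R := ℝ) (φ := fun _ : Fin p => ℝ) k)).hasFDerivAt (x := u)).fderiv
  simp only [ContinuousLinearMap.add_apply, ContinuousLinearMap.smul_apply, smul_eq_mul, hfd,
    ContinuousLinearMap.comp_apply, ContinuousLinearMap.proj_apply]
  have : (Pi.single i 1 : E) k = if k = i then (1:ℝ) else 0 := Pi.single_apply i (1:ℝ) k
  rw [this]
  show (u k : ℂ) * du i g u v + g u v * _ = _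
  split <;> simp <;> ring

theorem dv_coordV {g : E → F → ℂ} (h : Sm g) (k j : Fin q) :
    dv j (fun u v => (v k : ℂ) * g u v)
      = fun u v => (if k = j then 1 else 0) * g u v + (v k : ℂ) * dv j g u v := by
  funext u v
  show fderiv ℝ (fun v' => ((v' k : ℝ) : ℂ) * g u v') v (Pi.single j 1) = _
  have hcd : DifferentiableAt ℝ (fun v' : F => ((v' k : ℝ) : ℂ)) v :=
    (Complex.ofRealCLM.differentiable.comp
      ((ContinuousLinearMap.proj (R := ℝ) (φ := fun _ : Fin q => ℝ) k).differentiable)) v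
  rw [fderiv_fun_mul hcd (h.d2 u v)]
  have hfd : fderiv ℝ (fun v' : F => ((v' k : ℝ) : ℂ)) v
      = Complex.ofRealCLM.comp (ContinuousLinearMap.proj (R := ℝ) (φ := fun _ : Fin q => ℝ) k) :=
    ((Complex.ofRealCLM.comp (ContinuousLinearMap.proj (R := ℝ) (φ := fun _ : Fin q => ℝ) k)).hasFDerivAt (x := v)).fderiv
  simp only [ContinuousLinearMap.add_apply, ContinuousLinearMap.smul_apply, smul_eq_mul, hfd,
    ContinuousLinearMap.comp_apply, ContinuousLinearMap.proj_apply]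
  have : (Pi.single j 1 : F) k = if k = j then (1:ℝ) else 0 := Pi.single_apply j (1:ℝ) k
  rw [this]
  show (v k : ℂ) * dv j g u v + g u v * _ = _
  split <;> simp <;> ring

end Lib3
section Lib4
variable {p q : ℕ}

local notation "E" => (Fin p → ℝ)
local notation "F" => (Fin q → ℝ)

theorem Sm.constMul {g : E → F → ℂ} (h : Sm g) (c : ℂ) :
    Sm (fun u v => c * g u v) :=
  contDiff_const.mul h

theorem Sm.add {g h : E → F → ℂ} (hg : Sm g) (hh : Sm h) :
    Sm (fun u v => g u v + h u v) :=
  ContDiff.add hg hh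

theorem Sm.sub {g h : E → F → ℂ} (hg : Sm g) (hh : Sm h) :
    Sm (fun u v => g u v - h u v) :=
  ContDiff.sub hg hh

theorem Sm.sum {ι : Type*} {s : Finset ι} {G : ι → E → F → ℂ}
    (h : ∀ k ∈ s, Sm (G k)) :
    Sm (fun u v => ∑ k ∈ s, G k u v) :=
  ContDiff.sum h

theorem coordU_contDiff (k : Fin p) :
    ContDiff ℝ (⊤ : ℕ∞) (fun x : E × F => ((x.1 k : ℝ) : ℂ)) :=
  Complex.ofRealCLM.contDiff.comp
    ((ContinuousLinearMap.proj (R := ℝ) (φ := fun _ : Fin p => ℝ) k).contDiff.comp contDiff_fst)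

theorem coordV_contDiff (l : Fin q) :
    ContDiff ℝ (⊤ : ℕ∞) (fun x : E × F => ((x.2 l : ℝ) : ℂ)) :=
  Complex.ofRealCLM.contDiff.comp
    ((ContinuousLinearMap.proj (R := ℝ) (φ := fun _ : Fin q => ℝ) l).contDiff.comp contDiff_snd)

theorem Sm.coordU {g : E → F → ℂ} (k : Fin p) (h : Sm g) :
    Sm (fun u v => (u k : ℂ) * g u v) :=
  (coordU_contDiff k).mul h

theorem Sm.coordV {g : E → F → ℂ} (l : Fin q) (h : Sm g) :
    Sm (fun u v => (v l : ℂ) * g u v) :=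
  (coordV_contDiff l).mul h

theorem normU_contDiff :
    ContDiff ℝ (⊤ : ℕ∞) (fun x : E × F => ((∑ k, (x.1 k)^2 : ℝ) : ℂ)) := by
  have h1 : ContDiff ℝ (⊤ : ℕ∞) (fun x : E × F => (∑ k, (x.1 k)^2 : ℝ)) :=
    ContDiff.sum (fun k _ =>
      ((ContinuousLinearMap.proj (R := ℝ) (φ := fun _ : Fin p => ℝ) k).contDiff.comp
        contDiff_fst).pow 2)
  exact Complex.ofRealCLM.contDiff.comp h1

theorem normV_contDiff :
    ContDiff ℝ (⊤ : ℕ∞) (fun x : E × F => ((∑ l, (x.2 l)^2 : ℝ) : ℂ)) := by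
  have h1 : ContDiff ℝ (⊤ : ℕ∞) (fun x : E × F => (∑ l, (x.2 l)^2 : ℝ)) :=
    ContDiff.sum (fun l _ =>
      ((ContinuousLinearMap.proj (R := ℝ) (φ := fun _ : Fin q => ℝ) l).contDiff.comp
        contDiff_snd).pow 2)
  exact Complex.ofRealCLM.contDiff.comp h1

theorem Sm.normU {g : E → F → ℂ} (h : Sm g) :
    Sm (fun u v => ((∑ k, (u k)^2 : ℝ) : ℂ) * g u v) :=
  normU_contDiff.mul h

theorem Sm.normV {g : E → F → ℂ} (h : Sm g) :
    Sm (fun u v => ((∑ l, (v l)^2 : ℝ) : ℂ) * g u v) :=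
  normV_contDiff.mul h

theorem Sm.H1op {f : E → F → ℂ} (h : Sm f) : Sm (H1op f) :=
  Sm.constMul ((Sm.sum (fun i _ => (h.Du i).Du i)).add (Sm.normV h)) _

theorem Sm.H2op {f : E → F → ℂ} (h : Sm f) : Sm (H2op f) :=
  Sm.constMul ((Sm.sum (fun j _ => (h.Dv j).Dv j)).add (Sm.normU h)) _

theorem Sm.Dop {f : E → F → ℂ} (h : Sm f) : Sm (Stmt12.Dop f) :=
  Sm.constMul (((Sm.sum (fun i _ => Sm.coordU i (h.Du i))).sub
    (Sm.sum (fun j _ => Sm.coordV j (h.Dv j)))).add (Sm.constMul h _)) _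

end Lib4
section Lib5
variable {p q : ℕ}

local notation "E" => (Fin p → ℝ)
local notation "F" => (Fin q → ℝ)

theorem du_coordV {g : E → F → ℂ} (h : Sm g) (l : Fin q) (i : Fin p) :
    du i (fun u v => (v l : ℂ) * g u v) = fun u v => (v l : ℂ) * du i g u v := by
  funext u v
  show fderiv ℝ (fun u' => (v l : ℂ) * g u' v) u (Pi.single i 1) = _
  rw [fderiv_const_mul (h.d1 v u) (v l : ℂ)]
  rfl

theorem dv_coordU {g : E → F → ℂ} (h : Sm g) (k : Fin p) (j : Fin q) :
    dv j (fun u v => (u k : ℂ) * g u v) = fun u v => (u k : ℂ) * dv j g u v := by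
  funext u v
  show fderiv ℝ (fun v' => (u k : ℂ) * g u v') v (Pi.single j 1) = _
  rw [fderiv_const_mul (h.d2 u v) (u k : ℂ)]
  rfl

theorem du_normV {g : E → F → ℂ} (h : Sm g) (i : Fin p) :
    du i (fun u v => ((∑ l, (v l)^2 : ℝ) : ℂ) * g u v)
      = fun u v => ((∑ l, (v l)^2 : ℝ) : ℂ) * du i g u v := by
  funext u v
  show fderiv ℝ (fun u' => ((∑ l, (v l)^2 : ℝ) : ℂ) * g u' v) u (Pi.single i 1) = _
  rw [fderiv_const_mul (h.d1 v u) _]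
  rfl

theorem dv_normU {g : E → F → ℂ} (h : Sm g) (j : Fin q) :
    dv j (fun u v => ((∑ k, (u k)^2 : ℝ) : ℂ) * g u v)
      = fun u v => ((∑ k, (u k)^2 : ℝ) : ℂ) * dv j g u v := by
  funext u v
  show fderiv ℝ (fun v' => ((∑ k, (u k)^2 : ℝ) : ℂ) * g u v') v (Pi.single j 1) = _
  rw [fderiv_const_mul (h.d2 u v) _]
  rfl

theorem sum_sq_mul {n : ℕ} (w : Fin n → ℝ) (z : ℂ) :
    (∑ l, (w l : ℂ) * ((w l : ℂ) * z)) = ((∑ l, (w l)^2 : ℝ) : ℂ) * z := by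
  push_cast
  rw [Finset.sum_mul]
  exact Finset.sum_congr rfl fun l _ => by ring

theorem du_normU {g : E → F → ℂ} (h : Sm g) (i : Fin p) :
    du i (fun u v => ((∑ k, (u k)^2 : ℝ) : ℂ) * g u v)
      = fun u v => 2 * (u i : ℂ) * g u v + ((∑ k, (u k)^2 : ℝ) : ℂ) * du i g u v := by
  have e0 : (fun (u : E) (v : F) => ((∑ k, (u k)^2 : ℝ) : ℂ) * g u v)
      = fun u v => ∑ k, (u k : ℂ) * ((u k : ℂ) * g u v) := by
    funext u v
    rw [sum_sq_mul]
  rw [e0, du_sum (fun k _ => Sm.coordU k (Sm.coordU k h)) i]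
  have e1 : ∀ k, du i (fun u v => (u k : ℂ) * ((u k : ℂ) * g u v))
      = fun u v => (if k = i then 1 else 0) * ((u k : ℂ) * g u v)
          + (u k : ℂ) * ((if k = i then 1 else 0) * g u v + (u k : ℂ) * du i g u v) := by
    intro k
    rw [du_coordU (Sm.coordU k h) k i, du_coordU h k i]
  funext u v
  simp only [e1]
  rw [Finset.sum_add_distrib]
  have e2 : (∑ k, (if k = i then (1:ℂ) else 0) * ((u k : ℂ) * g u v)) = (u i : ℂ) * g u v := by
    simp [ite_mul]
  have e3 : (∑ k, (u k : ℂ) * ((if k = i then (1:ℂ) else 0) * g u v + (u k : ℂ) * du i g u v))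
      = (u i : ℂ) * g u v + ((∑ k, (u k)^2 : ℝ) : ℂ) * du i g u v := by
    have : ∀ k, (u k : ℂ) * ((if k = i then (1:ℂ) else 0) * g u v + (u k : ℂ) * du i g u v)
        = (if k = i then (u k : ℂ) * g u v else 0) + (u k : ℂ) * ((u k : ℂ) * du i g u v) := by
      intro k
      split <;> ring
    rw [Finset.sum_congr rfl (fun k _ => this k), Finset.sum_add_distrib,
      Finset.sum_ite_eq' Finset.univ i, sum_sq_mul]
    simp
  rw [e2, e3]
  ring

theorem dv_normV {g : E → F → ℂ} (h : Sm g) (j : Fin q) :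
    dv j (fun u v => ((∑ l, (v l)^2 : ℝ) : ℂ) * g u v)
      = fun u v => 2 * (v j : ℂ) * g u v + ((∑ l, (v l)^2 : ℝ) : ℂ) * dv j g u v := by
  have e0 : (fun (u : E) (v : F) => ((∑ l, (v l)^2 : ℝ) : ℂ) * g u v)
      = fun u v => ∑ l, (v l : ℂ) * ((v l : ℂ) * g u v) := by
    funext u v
    rw [sum_sq_mul]
  rw [e0, dv_sum (fun l _ => Sm.coordV l (Sm.coordV l h)) j]
  have e1 : ∀ l, dv j (fun u v => (v l : ℂ) * ((v l : ℂ) * g u v))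
      = fun u v => (if l = j then 1 else 0) * ((v l : ℂ) * g u v)
          + (v l : ℂ) * ((if l = j then 1 else 0) * g u v + (v l : ℂ) * dv j g u v) := by
    intro l
    rw [dv_coordV (Sm.coordV l h) l j, dv_coordV h l j]
  funext u v
  simp only [e1]
  rw [Finset.sum_add_distrib]
  have e2 : (∑ l, (if l = j then (1:ℂ) else 0) * ((v l : ℂ) * g u v)) = (v j : ℂ) * g u v := by
    simp [ite_mul]
  have e3 : (∑ l, (v l : ℂ) * ((if l = j then (1:ℂ) else 0) * g u v + (v l : ℂ) * dv j g u v))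
      = (v j : ℂ) * g u v + ((∑ l, (v l)^2 : ℝ) : ℂ) * dv j g u v := by
    have : ∀ l, (v l : ℂ) * ((if l = j then (1:ℂ) else 0) * g u v + (v l : ℂ) * dv j g u v)
        = (if l = j then (v l : ℂ) * g u v else 0) + (v l : ℂ) * ((v l : ℂ) * dv j g u v) := by
      intro l
      split <;> ring
    rw [Finset.sum_congr rfl (fun l _ => this l), Finset.sum_add_distrib,
      Finset.sum_ite_eq' Finset.univ j, sum_sq_mul]
    simp
  rw [e2, e3]
  ring

end Lib5
section Lib6
variable {p q : ℕ}

local notation "E" => (Fin p → ℝ)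
local notation "F" => (Fin q → ℝ)

theorem sum_delta {n : ℕ} (k : Fin n) (X : Fin n → ℂ) :
    (∑ l, (if k = l then (1:ℂ) else 0) * X l) = X k := by
  simp [ite_mul]

theorem comm_du_H1 {f : E → F → ℂ} (h : Sm f) (k : Fin p) :
    du k (H1op f) = H1op (du k f) := by
  have hsum : Sm (fun u v => ∑ i, du i (du i f) u v) := Sm.sum (fun i _ => (h.Du i).Du i)
  have hcv : Sm (fun u v => ((∑ j, (v j)^2 : ℝ) : ℂ) * f u v) := Sm.normV h
  have eb : ∀ i, du k (du i (du i f)) = du i (du i (du k f)) := fun i => by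
    rw [du_du_comm (h.Du i) k i, du_du_comm h k i]
  funext u v
  simp only [H1op_def]
  simp only [du_const_mul (hsum.add hcv) (-(1/2:ℂ)) k, du_add hsum hcv k,
    du_sum (fun i _ => (h.Du i).Du i) k, du_normV h k, eb]

theorem comm_dv_H1 {f : E → F → ℂ} (h : Sm f) (l : Fin q) :
    dv l (H1op f) = fun u v => H1op (dv l f) u v - (v l : ℂ) * f u v := by
  have hsum : Sm (fun u v => ∑ i, du i (du i f) u v) := Sm.sum (fun i _ => (h.Du i).Du i)
  have hcv : Sm (fun u v => ((∑ j, (v j)^2 : ℝ) : ℂ) * f u v) := Sm.normV h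
  have eb : ∀ i, dv l (du i (du i f)) = du i (du i (dv l f)) := fun i => by
    rw [← du_dv_comm (h.Du i) i l, ← du_dv_comm h i l]
  funext u v
  simp only [H1op_def]
  simp only [dv_const_mul (hsum.add hcv) (-(1/2:ℂ)) l, dv_add hsum hcv l,
    dv_sum (fun i _ => (h.Du i).Du i) l, dv_normV h l, eb]
  ring

theorem comm_dv_H2 {f : E → F → ℂ} (h : Sm f) (l : Fin q) :
    dv l (H2op f) = H2op (dv l f) := by
  have hsum : Sm (fun u v => ∑ j, dv j (dv j f) u v) := Sm.sum (fun j _ => (h.Dv j).Dv j)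
  have hcu : Sm (fun u v => ((∑ i, (u i)^2 : ℝ) : ℂ) * f u v) := Sm.normU h
  have eb : ∀ j, dv l (dv j (dv j f)) = dv j (dv j (dv l f)) := fun j => by
    rw [dv_dv_comm (h.Dv j) l j, dv_dv_comm h l j]
  funext u v
  simp only [H2op_def]
  simp only [dv_const_mul (hsum.add hcu) (-(1/2:ℂ)) l, dv_add hsum hcu l,
    dv_sum (fun j _ => (h.Dv j).Dv j) l, dv_normU h l, eb]

theorem comm_du_H2 {f : E → F → ℂ} (h : Sm f) (k : Fin p) :
    du k (H2op f) = fun u v => H2op (du k f) u v - (u k : ℂ) * f u v := by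
  have hsum : Sm (fun u v => ∑ j, dv j (dv j f) u v) := Sm.sum (fun j _ => (h.Dv j).Dv j)
  have hcu : Sm (fun u v => ((∑ i, (u i)^2 : ℝ) : ℂ) * f u v) := Sm.normU h
  have eb : ∀ j, du k (dv j (dv j f)) = dv j (dv j (du k f)) := fun j => by
    rw [du_dv_comm (h.Dv j) k j, du_dv_comm h k j]
  funext u v
  simp only [H2op_def]
  simp only [du_const_mul (hsum.add hcu) (-(1/2:ℂ)) k, du_add hsum hcu k,
    du_sum (fun j _ => (h.Dv j).Dv j) k, du_normU h k, eb]
  ring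

theorem comm_du_D {f : E → F → ℂ} (h : Sm f) (k : Fin p) :
    du k (Dop f) = fun u v => Dop (du k f) u v - I * du k f u v := by
  have hs1 : Sm (fun u v => ∑ l, (u l : ℂ) * du l f u v) :=
    Sm.sum (fun l _ => Sm.coordU l (h.Du l))
  have hs2 : Sm (fun u v => ∑ m, (v m : ℂ) * dv m f u v) :=
    Sm.sum (fun m _ => Sm.coordV m (h.Dv m))
  have hef : Sm (fun u v => (((p:ℂ) - (q:ℂ))/2) * f u v) := Sm.constMul h _
  have e2 : ∀ l, du k (fun u v => (u l : ℂ) * du l f u v)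
      = fun u v => (if l = k then 1 else 0) * du l f u v + (u l : ℂ) * du l (du k f) u v := by
    intro l
    rw [du_coordU (h.Du l) l k, du_du_comm h k l]
  have e3 : ∀ m, du k (fun u v => (v m : ℂ) * dv m f u v)
      = fun u v => (v m : ℂ) * dv m (du k f) u v := by
    intro m
    rw [du_coordV (h.Dv m) m k, du_dv_comm h k m]
  funext u v
  simp only [Dop_def]
  simp only [du_const_mul ((hs1.sub hs2).add hef) (-I) k, du_add (hs1.sub hs2) hef k,
    du_sub hs1 hs2 k, du_sum (fun l _ => Sm.coordU l (h.Du l)) k,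
    du_sum (fun m _ => Sm.coordV m (h.Dv m)) k,
    du_const_mul h (((p:ℂ) - (q:ℂ))/2) k, e2, e3]
  rw [Finset.sum_add_distrib]
  have e4 : (∑ l, (if l = k then (1:ℂ) else 0) * du l f u v) = du k f u v := by
    simp [ite_mul]
  rw [e4]
  ring

theorem comm_dv_D {f : E → F → ℂ} (h : Sm f) (k : Fin q) :
    dv k (Dop f) = fun u v => Dop (dv k f) u v + I * dv k f u v := by
  have hs1 : Sm (fun u v => ∑ l, (u l : ℂ) * du l f u v) :=
    Sm.sum (fun l _ => Sm.coordU l (h.Du l))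
  have hs2 : Sm (fun u v => ∑ m, (v m : ℂ) * dv m f u v) :=
    Sm.sum (fun m _ => Sm.coordV m (h.Dv m))
  have hef : Sm (fun u v => (((p:ℂ) - (q:ℂ))/2) * f u v) := Sm.constMul h _
  have e2 : ∀ l, dv k (fun u v => (u l : ℂ) * du l f u v)
      = fun u v => (u l : ℂ) * du l (dv k f) u v := by
    intro l
    rw [dv_coordU (h.Du l) l k, ← du_dv_comm h l k]
  have e3 : ∀ m, dv k (fun u v => (v m : ℂ) * dv m f u v)
      = fun u v => (if m = k then 1 else 0) * dv m f u v + (v m : ℂ) * dv m (dv k f) u v := by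
    intro m
    rw [dv_coordV (h.Dv m) m k, dv_dv_comm h k m]
  funext u v
  simp only [Dop_def]
  simp only [dv_const_mul ((hs1.sub hs2).add hef) (-I) k, dv_add (hs1.sub hs2) hef k,
    dv_sub hs1 hs2 k, dv_sum (fun l _ => Sm.coordU l (h.Du l)) k,
    dv_sum (fun m _ => Sm.coordV m (h.Dv m)) k,
    dv_const_mul h (((p:ℂ) - (q:ℂ))/2) k, e2, e3]
  rw [Finset.sum_add_distrib]
  have e4 : (∑ m, (if m = k then (1:ℂ) else 0) * dv m f u v) = dv k f u v := by
    simp [ite_mul]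
  rw [e4]
  ring

end Lib6
section Lib7
variable {p q : ℕ}

local notation "E" => (Fin p → ℝ)
local notation "F" => (Fin q → ℝ)

theorem H1_Mu {g : E → F → ℂ} (h : Sm g) (k : Fin p) :
    H1op (fun u v => (u k : ℂ) * g u v)
      = fun u v => (u k : ℂ) * H1op g u v - du k g u v := by
  have e1 : ∀ i, du i (du i (fun u v => (u k : ℂ) * g u v))
      = fun u v => (if k = i then 1 else 0) * du i g u v
          + ((if k = i then 1 else 0) * du i g u v + (u k : ℂ) * du i (du i g) u v) := by
    intro i
    simp only [du_coordU h k i,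
      du_add (Sm.constMul h (if k = i then (1:ℂ) else 0)) (Sm.coordU k (h.Du i)) i,
      du_const_mul h (if k = i then (1:ℂ) else 0) i, du_coordU (h.Du i) k i]
  funext u v
  simp only [H1op_def, e1]
  rw [Finset.sum_add_distrib, Finset.sum_add_distrib,
    sum_delta k (fun i => du i g u v), ← Finset.mul_sum]
  ring

theorem H1_Mv {g : E → F → ℂ} (h : Sm g) (l : Fin q) :
    H1op (fun u v => (v l : ℂ) * g u v) = fun u v => (v l : ℂ) * H1op g u v := by
  have e1 : ∀ i, du i (du i (fun u v => (v l : ℂ) * g u v))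
      = fun u v => (v l : ℂ) * du i (du i g) u v := by
    intro i
    simp only [du_coordV h l i, du_coordV (h.Du i) l i]
  funext u v
  simp only [H1op_def, e1]
  rw [← Finset.mul_sum]
  ring

theorem H2_Mv {g : E → F → ℂ} (h : Sm g) (l : Fin q) :
    H2op (fun u v => (v l : ℂ) * g u v)
      = fun u v => (v l : ℂ) * H2op g u v - dv l g u v := by
  have e1 : ∀ j, dv j (dv j (fun u v => (v l : ℂ) * g u v))
      = fun u v => (if l = j then 1 else 0) * dv j g u v
          + ((if l = j then 1 else 0) * dv j g u v + (v l : ℂ) * dv j (dv j g) u v) := by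
    intro j
    simp only [dv_coordV h l j,
      dv_add (Sm.constMul h (if l = j then (1:ℂ) else 0)) (Sm.coordV l (h.Dv j)) j,
      dv_const_mul h (if l = j then (1:ℂ) else 0) j, dv_coordV (h.Dv j) l j]
  funext u v
  simp only [H2op_def, e1]
  rw [Finset.sum_add_distrib, Finset.sum_add_distrib,
    sum_delta l (fun j => dv j g u v), ← Finset.mul_sum]
  ring

theorem H2_Mu {g : E → F → ℂ} (h : Sm g) (k : Fin p) :
    H2op (fun u v => (u k : ℂ) * g u v) = fun u v => (u k : ℂ) * H2op g u v := by
  have e1 : ∀ j, dv j (dv j (fun u v => (u k : ℂ) * g u v))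
      = fun u v => (u k : ℂ) * dv j (dv j g) u v := by
    intro j
    simp only [dv_coordU h k j, dv_coordU (h.Dv j) k j]
  funext u v
  simp only [H2op_def, e1]
  rw [← Finset.mul_sum]
  ring

theorem D_Mu {g : E → F → ℂ} (h : Sm g) (k : Fin p) :
    Dop (fun u v => (u k : ℂ) * g u v)
      = fun u v => (u k : ℂ) * Dop g u v - I * ((u k : ℂ) * g u v) := by
  have e2 : ∀ l, du l (fun u v => (u k : ℂ) * g u v)
      = fun u v => (if k = l then 1 else 0) * g u v + (u k : ℂ) * du l g u v :=
    fun l => du_coordU h k l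
  have e3 : ∀ m, dv m (fun u v => (u k : ℂ) * g u v)
      = fun u v => (u k : ℂ) * dv m g u v := fun m => dv_coordU h k m
  funext u v
  simp only [Dop_def, e2, e3]
  have e4 : ∀ l, (u l : ℂ) * ((if k = l then (1:ℂ) else 0) * g u v + (u k : ℂ) * du l g u v)
      = (if k = l then (1:ℂ) else 0) * ((u l : ℂ) * g u v)
          + (u k : ℂ) * ((u l : ℂ) * du l g u v) := fun l => by ring
  have e5 : ∀ m, (v m : ℂ) * ((u k : ℂ) * dv m g u v)
      = (u k : ℂ) * ((v m : ℂ) * dv m g u v) := fun m => by ring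
  rw [Finset.sum_congr rfl (fun l _ => e4 l), Finset.sum_add_distrib,
    sum_delta k (fun l => (u l : ℂ) * g u v),
    Finset.sum_congr rfl (fun m _ => e5 m)]
  rw [← Finset.mul_sum, ← Finset.mul_sum]
  ring

theorem D_Mv {g : E → F → ℂ} (h : Sm g) (l : Fin q) :
    Dop (fun u v => (v l : ℂ) * g u v)
      = fun u v => (v l : ℂ) * Dop g u v + I * ((v l : ℂ) * g u v) := by
  have e2 : ∀ k, du k (fun u v => (v l : ℂ) * g u v)
      = fun u v => (v l : ℂ) * du k g u v := fun k => du_coordV h l k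
  have e3 : ∀ m, dv m (fun u v => (v l : ℂ) * g u v)
      = fun u v => (if l = m then 1 else 0) * g u v + (v l : ℂ) * dv m g u v :=
    fun m => dv_coordV h l m
  funext u v
  simp only [Dop_def, e2, e3]
  have e4 : ∀ m, (v m : ℂ) * ((if l = m then (1:ℂ) else 0) * g u v + (v l : ℂ) * dv m g u v)
      = (if l = m then (1:ℂ) else 0) * ((v m : ℂ) * g u v)
          + (v l : ℂ) * ((v m : ℂ) * dv m g u v) := fun m => by ring
  have e5 : ∀ k, (u k : ℂ) * ((v l : ℂ) * du k g u v)
      = (v l : ℂ) * ((u k : ℂ) * du k g u v) := fun k => by ring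
  rw [Finset.sum_congr rfl (fun m _ => e4 m), Finset.sum_add_distrib,
    sum_delta l (fun m => (v m : ℂ) * g u v),
    Finset.sum_congr rfl (fun k _ => e5 k)]
  rw [← Finset.mul_sum, ← Finset.mul_sum]
  ring

theorem H1op_add {g h : E → F → ℂ} (hg : Sm g) (hh : Sm h) :
    H1op (fun u v => g u v + h u v) = fun u v => H1op g u v + H1op h u v := by
  have e1 : ∀ i, du i (du i (fun u v => g u v + h u v))
      = fun u v => du i (du i g) u v + du i (du i h) u v := by
    intro i
    simp only [du_add hg hh i, du_add (hg.Du i) (hh.Du i) i]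
  funext u v
  simp only [H1op_def, e1]
  rw [Finset.sum_add_distrib]
  ring

theorem H2op_add {g h : E → F → ℂ} (hg : Sm g) (hh : Sm h) :
    H2op (fun u v => g u v + h u v) = fun u v => H2op g u v + H2op h u v := by
  have e1 : ∀ j, dv j (dv j (fun u v => g u v + h u v))
      = fun u v => dv j (dv j g) u v + dv j (dv j h) u v := by
    intro j
    simp only [dv_add hg hh j, dv_add (hg.Dv j) (hh.Dv j) j]
  funext u v
  simp only [H2op_def, e1]
  rw [Finset.sum_add_distrib]
  ring

theorem Dop_add {g h : E → F → ℂ} (hg : Sm g) (hh : Sm h) :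
    Dop (fun u v => g u v + h u v) = fun u v => Dop g u v + Dop h u v := by
  have e1 : ∀ l, du l (fun u v => g u v + h u v)
      = fun u v => du l g u v + du l h u v := fun l => du_add hg hh l
  have e2 : ∀ m, dv m (fun u v => g u v + h u v)
      = fun u v => dv m g u v + dv m h u v := fun m => dv_add hg hh m
  funext u v
  simp only [Dop_def, e1, e2]
  have e3 : ∀ l, (u l : ℂ) * (du l g u v + du l h u v)
      = (u l : ℂ) * du l g u v + (u l : ℂ) * du l h u v := fun l => by ring
  have e4 : ∀ m, (v m : ℂ) * (dv m g u v + dv m h u v)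
      = (v m : ℂ) * dv m g u v + (v m : ℂ) * dv m h u v := fun m => by ring
  rw [Finset.sum_congr rfl (fun l _ => e3 l), Finset.sum_congr rfl (fun m _ => e4 m),
    Finset.sum_add_distrib, Finset.sum_add_distrib]
  ring

theorem H1op_lin2 (c : ℂ) {g h : E → F → ℂ} (hg : Sm g) (hh : Sm h) :
    H1op (fun u v => c * (g u v - h u v))
      = fun u v => c * (H1op g u v - H1op h u v) := by
  have e1 : ∀ i, du i (du i (fun u v => c * (g u v - h u v)))
      = fun u v => c * (du i (du i g) u v - du i (du i h) u v) := by
    intro i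
    simp only [du_const_mul (hg.sub hh) c i, du_sub hg hh i,
      du_const_mul ((hg.Du i).sub (hh.Du i)) c i, du_sub (hg.Du i) (hh.Du i) i]
  funext u v
  simp only [H1op_def, e1]
  have e2 : ∀ i, c * (du i (du i g) u v - du i (du i h) u v)
      = c * du i (du i g) u v - c * du i (du i h) u v := fun i => by ring
  rw [Finset.sum_congr rfl (fun i _ => e2 i), Finset.sum_sub_distrib,
    ← Finset.mul_sum, ← Finset.mul_sum]
  ring

theorem H2op_lin2 (c : ℂ) {g h : E → F → ℂ} (hg : Sm g) (hh : Sm h) :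
    H2op (fun u v => c * (g u v - h u v))
      = fun u v => c * (H2op g u v - H2op h u v) := by
  have e1 : ∀ j, dv j (dv j (fun u v => c * (g u v - h u v)))
      = fun u v => c * (dv j (dv j g) u v - dv j (dv j h) u v) := by
    intro j
    simp only [dv_const_mul (hg.sub hh) c j, dv_sub hg hh j,
      dv_const_mul ((hg.Dv j).sub (hh.Dv j)) c j, dv_sub (hg.Dv j) (hh.Dv j) j]
  funext u v
  simp only [H2op_def, e1]
  have e2 : ∀ j, c * (dv j (dv j g) u v - dv j (dv j h) u v)
      = c * dv j (dv j g) u v - c * dv j (dv j h) u v := fun j => by ring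
  rw [Finset.sum_congr rfl (fun j _ => e2 j), Finset.sum_sub_distrib,
    ← Finset.mul_sum, ← Finset.mul_sum]
  ring

theorem Dop_lin2 (c : ℂ) {g h : E → F → ℂ} (hg : Sm g) (hh : Sm h) :
    Dop (fun u v => c * (g u v - h u v))
      = fun u v => c * (Dop g u v - Dop h u v) := by
  have e1 : ∀ l, du l (fun u v => c * (g u v - h u v))
      = fun u v => c * (du l g u v - du l h u v) := by
    intro l
    simp only [du_const_mul (hg.sub hh) c l, du_sub hg hh l]
  have e2 : ∀ m, dv m (fun u v => c * (g u v - h u v))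
      = fun u v => c * (dv m g u v - dv m h u v) := by
    intro m
    simp only [dv_const_mul (hg.sub hh) c m, dv_sub hg hh m]
  funext u v
  simp only [Dop_def, e1, e2]
  have e3 : ∀ l, (u l : ℂ) * (c * (du l g u v - du l h u v))
      = c * ((u l : ℂ) * du l g u v) - c * ((u l : ℂ) * du l h u v) := fun l => by ring
  have e4 : ∀ m, (v m : ℂ) * (c * (dv m g u v - dv m h u v))
      = c * ((v m : ℂ) * dv m g u v) - c * ((v m : ℂ) * dv m h u v) := fun m => by ring
  rw [Finset.sum_congr rfl (fun l _ => e3 l), Finset.sum_congr rfl (fun m _ => e4 m),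
    Finset.sum_sub_distrib, Finset.sum_sub_distrib]
  simp only [← Finset.mul_sum]
  ring

end Lib7
/-- The observables `Â_{ij}`, `B̂_{ij}`, `Ĉ_{ij}` commute with the quantum
constraints `Ĥ₁`, `Ĥ₂`, `D̂` on smooth functions. -/
theorem observables_commute (f : (Fin p → ℝ) → (Fin q → ℝ) → ℂ)
    (hf : ContDiff ℝ (⊤ : ℕ∞) (fun x : (Fin p → ℝ) × (Fin q → ℝ) => f x.1 x.2))
    (u : Fin p → ℝ) (v : Fin q → ℝ) :
    (∀ i j : Fin p,
      Aop i j (H1op f) u v = H1op (Aop i j f) u v ∧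
      Aop i j (H2op f) u v = H2op (Aop i j f) u v ∧
      Aop i j (Dop f) u v = Dop (Aop i j f) u v) ∧
    (∀ i j : Fin q,
      Bop i j (H1op f) u v = H1op (Bop i j f) u v ∧
      Bop i j (H2op f) u v = H2op (Bop i j f) u v ∧
      Bop i j (Dop f) u v = Dop (Bop i j f) u v) ∧
    (∀ (i : Fin p) (j : Fin q),
      Cop i j (H1op f) u v = H1op (Cop i j f) u v ∧
      Cop i j (H2op f) u v = H2op (Cop i j f) u v ∧
      Cop i j (Dop f) u v = Dop (Cop i j f) u v) := by
  have h : Sm f := hf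
  refine ⟨fun i j => ?_, fun i j => ?_, fun i j => ?_⟩
  · -- A block
    have hMj : Sm (fun u v => (u i : ℂ) * du j f u v) := Sm.coordU i (h.Du j)
    have hMi : Sm (fun u v => (u j : ℂ) * du i f u v) := Sm.coordU j (h.Du i)
    refine ⟨?_, ?_, ?_⟩
    · simp only [Aop_def, comm_du_H1 h j, comm_du_H1 h i, H1op_lin2 (-I) hMj hMi,
        H1_Mu (h.Du j) i, H1_Mu (h.Du i) j, du_du_comm h j i]
      ring
    · simp only [Aop_def, comm_du_H2 h j, comm_du_H2 h i, H2op_lin2 (-I) hMj hMi,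
        H2_Mu (h.Du j) i, H2_Mu (h.Du i) j]
      ring
    · simp only [Aop_def, comm_du_D h j, comm_du_D h i, Dop_lin2 (-I) hMj hMi,
        D_Mu (h.Du j) i, D_Mu (h.Du i) j]
      ring
  · -- B block
    have hMj : Sm (fun u v => (v i : ℂ) * dv j f u v) := Sm.coordV i (h.Dv j)
    have hMi : Sm (fun u v => (v j : ℂ) * dv i f u v) := Sm.coordV j (h.Dv i)
    refine ⟨?_, ?_, ?_⟩
    · simp only [Bop_def, comm_dv_H1 h j, comm_dv_H1 h i, H1op_lin2 (-I) hMj hMi,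
        H1_Mv (h.Dv j) i, H1_Mv (h.Dv i) j]
      ring
    · simp only [Bop_def, comm_dv_H2 h j, comm_dv_H2 h i, H2op_lin2 (-I) hMj hMi,
        H2_Mv (h.Dv j) i, H2_Mv (h.Dv i) j, dv_dv_comm h j i]
      ring
    · simp only [Bop_def, comm_dv_D h j, comm_dv_D h i, Dop_lin2 (-I) hMj hMi,
        D_Mv (h.Dv j) i, D_Mv (h.Dv i) j]
      ring
  · -- C block
    have cop2 : Cop i j f
        = fun u v => (u i : ℂ) * ((v j : ℂ) * f u v) + du i (dv j f) u v := by
      funext u v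
      simp only [Cop_def]
      ring
    have cop2' : Cop i j (H1op f)
        = fun u v => (u i : ℂ) * ((v j : ℂ) * H1op f u v) + du i (dv j (H1op f)) u v := by
      funext u v
      simp only [Cop_def]
      ring
    have cop2'' : Cop i j (H2op f)
        = fun u v => (u i : ℂ) * ((v j : ℂ) * H2op f u v) + du i (dv j (H2op f)) u v := by
      funext u v
      simp only [Cop_def]
      ring
    have cop2''' : Cop i j (Dop f)
        = fun u v => (u i : ℂ) * ((v j : ℂ) * Dop f u v) + du i (dv j (Dop f)) u v := by
      funext u v
      simp only [Cop_def]
      ring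
    refine ⟨?_, ?_, ?_⟩
    · simp only [cop2', cop2, comm_dv_H1 h j,
        du_sub (Sm.H1op (h.Dv j)) (Sm.coordV j h) i, comm_du_H1 (h.Dv j) i,
        du_coordV h j i, H1op_add (Sm.coordU i (Sm.coordV j h)) ((h.Dv j).Du i),
        H1_Mu (Sm.coordV j h) i, H1_Mv h j]
      ring
    · simp only [cop2'', cop2, comm_dv_H2 h j, comm_du_H2 (h.Dv j) i,
        H2op_add (Sm.coordU i (Sm.coordV j h)) ((h.Dv j).Du i),
        H2_Mu (Sm.coordV j h) i, H2_Mv h j]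
      ring
    · simp only [cop2''', cop2, comm_dv_D h j,
        du_add (Sm.Dop (h.Dv j)) (Sm.constMul (h.Dv j) I) i, comm_du_D (h.Dv j) i,
        du_const_mul (h.Dv j) I i,
        Dop_add (Sm.coordU i (Sm.coordV j h)) ((h.Dv j).Du i),
        D_Mu (Sm.coordV j h) i, D_Mv h j]
      ring

end Stmt12
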